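/- Let P ⊆ ℝ² be finite with |P| ≥ 2 and let T be a Euclidean minimum spanning tree of P. Then every edge {p,q} of T is an edge of the Pie Delaunay graph PDG(P): there exist l ∈ {0,…,5} and an l-pie, empty with respect to P, with both p and q on its boundary. -/

import Mathlib

/- Common geometric setup: the Euclidean plane, wedges `W_l`, bisectors `b_l`,
equilateral triangles `∆_l` and `l`-tri's, circular sectors `σ_l` and `l`-pies,
and the proximity graphs (Semi-Yao, nearest-neighbor, Equilateral/Pie Delaunay,
Yao) together with Euclidean minimum spanning trees. -/

open Real EuclideanGeometry
open scoped RealInnerProductSpace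

noncomputable section

abbrev E : Type := EuclideanSpace ℝ (Fin 2)

/-- The point `(a, b)` in the Euclidean plane. -/
def pt (a b : ℝ) : E := (WithLp.equiv 2 (Fin 2 → ℝ)).symm ![a, b]

/-- The unit vector at polar angle `θ`. -/
def dir (θ : ℝ) : E := pt (Real.cos θ) (Real.sin θ)

/-- The lower boundary angle `(2l-1)π/6` of the `l`-th wedge. -/
def lo (l : Fin 6) : ℝ := (2 * ((l : ℕ) : ℝ) - 1) * π / 6

/-- The upper boundary angle `(2l+1)π/6` of the `l`-th wedge. -/
def hi (l : Fin 6) : ℝ := (2 * ((l : ℕ) : ℝ) + 1) * π / 6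

/-- The half-open wedge `W_l`: all nonzero points whose polar angle (mod `2π`)
lies in `[(2l-1)π/6, (2l+1)π/6)`. -/
def wedge (l : Fin 6) : Set E :=
  {x | x ≠ 0 ∧ ∃ θ : ℝ, lo l ≤ θ ∧ θ < hi l ∧ x = ‖x‖ • dir θ}

/-- `W_l(p)`, the translate of `W_l` with apex `p`. -/
def wedgeAt (l : Fin 6) (p : E) : Set E := {x | x - p ∈ wedge l}

/-- The unit bisector vector `b_l = (cos(lπ/3), sin(lπ/3))` of `W_l`. -/
def bvec (l : Fin 6) : E := dir (((l : ℕ) : ℝ) * π / 3)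

/-- `V_l(p) = P ∩ W_l(p)`. -/
def Vl (P : Finset E) (l : Fin 6) (p : E) : Set E := {x | x ∈ P ∧ x ∈ wedgeAt l p}

/-- The closed equilateral triangle `∆_l` with vertices `0`, `dir ((2l-1)π/6)`,
`dir ((2l+1)π/6)`. -/
def tri (l : Fin 6) : Set E := convexHull ℝ {0, dir (lo l), dir (hi l)}

/-- The vertex set of `∆_l`. -/
def triVerts (l : Fin 6) : Set E := {0, dir (lo l), dir (hi l)}

/-- The `l`-tri `c + lam • ∆_l`. -/
def lTri (l : Fin 6) (c : E) (lam : ℝ) : Set E := (fun x => c + lam • x) '' tri l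

/-- The closed circular sector (piece of pie) `σ_l` of the unit disk. -/
def sector (l : Fin 6) : Set E :=
  {x | ‖x‖ ≤ 1 ∧ (x = 0 ∨ ∃ θ : ℝ, lo l ≤ θ ∧ θ ≤ hi l ∧ x = ‖x‖ • dir θ)}

/-- The `l`-pie `c + lam • σ_l`. -/
def lPie (l : Fin 6) (c : E) (lam : ℝ) : Set E := (fun x => c + lam • x) '' sector l

/-- Directed Semi-Yao graph edge from `a` to `b`: `a ∈ V_l(b)` for some `l` and `a`
has the minimum `b_l`-coordinate among the points of `V_l(b)`. -/
def SYG (P : Finset E) (a b : E) : Prop :=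
  b ∈ P ∧ ∃ l : Fin 6, a ∈ Vl P l b ∧
    ∀ r ∈ Vl P l b, ⟪a - b, bvec l⟫ ≤ ⟪r - b, bvec l⟫

/-- Undirected Semi-Yao graph edge. -/
def SYGu (P : Finset E) (p q : E) : Prop := SYG P p q ∨ SYG P q p

/-- Directed nearest-neighbor graph edge from `a` to `b`: `b ∈ P \ {a}` and
`‖a - b‖ = min_{r ∈ P \ {a}} ‖a - r‖`. -/
def NNG (P : Finset E) (a b : E) : Prop :=
  a ∈ P ∧ b ∈ P ∧ b ≠ a ∧ ∀ r ∈ P, r ≠ a → ‖a - b‖ ≤ ‖a - r‖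

/-- Edge of the Equilateral Delaunay triangulation `EDT_l(P)`: there is an `l`-tri,
empty with respect to `P`, with both endpoints on its boundary. -/
def EDT (P : Finset E) (l : Fin 6) (p q : E) : Prop :=
  p ∈ P ∧ q ∈ P ∧ p ≠ q ∧ ∃ c : E, ∃ lam : ℝ, 0 < lam ∧
    p ∈ frontier (lTri l c lam) ∧ q ∈ frontier (lTri l c lam) ∧
    ∀ r ∈ P, r ∉ interior (lTri l c lam)

/-- Edge of the Equilateral Delaunay graph `EDG(P) = EDT_0(P) ∪ EDT_1(P)`. -/
def EDG (P : Finset E) (p q : E) : Prop := EDT P 0 p q ∨ EDT P 1 p q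

/-- Directed Yao-graph edge from `p` to `q`: `q ∈ V_l(p)` for some `l` and
`‖p - q‖ = min_{r ∈ V_l(p)} ‖p - r‖`. -/
def YG (P : Finset E) (p q : E) : Prop :=
  p ∈ P ∧ ∃ l : Fin 6, q ∈ Vl P l p ∧ ∀ r ∈ Vl P l p, ‖p - q‖ ≤ ‖p - r‖

/-- Edge of the Pie Delaunay triangulation `PDT_l(P)`: there is an `l`-pie, empty
with respect to `P`, with both endpoints on its boundary. -/
def PDT (P : Finset E) (l : Fin 6) (p q : E) : Prop :=
  p ∈ P ∧ q ∈ P ∧ p ≠ q ∧ ∃ c : E, ∃ lam : ℝ, 0 < lam ∧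
    p ∈ frontier (lPie l c lam) ∧ q ∈ frontier (lPie l c lam) ∧
    ∀ r ∈ P, r ∉ interior (lPie l c lam)

/-- Edge of the Pie Delaunay graph `PDG(P) = PDT_0(P) ∪ ⋯ ∪ PDT_5(P)`. -/
def PDG (P : Finset E) (p q : E) : Prop := ∃ l : Fin 6, PDT P l p q

/-- Total Euclidean edge weight of a graph on the points of `P`. -/
def edgeWeight (P : Finset E) (G : SimpleGraph {x // x ∈ P}) : ℝ :=
  ∑ e ∈ G.edgeSet.toFinite.toFinset,
    Sym2.lift ⟨fun (a b : {x // x ∈ P}) => ‖(a : E) - (b : E)‖,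
      fun _ _ => norm_sub_rev _ _⟩ e

/-- `T` is a Euclidean minimum spanning tree of `P`: a spanning tree (connected and
acyclic graph on the vertex set `P`) of minimum total Euclidean edge weight. -/
def IsEMST (P : Finset E) (T : SimpleGraph {x // x ∈ P}) : Prop :=
  T.IsTree ∧ ∀ G : SimpleGraph {x // x ∈ P}, G.IsTree → edgeWeight P T ≤ edgeWeight P G

/-! An EMST edge `pq` has an empty lune: if some `r ∈ P` were strictly closer than `‖p - q‖` to
both `p` and `q`, then replacing `pq` by whichever of `rq`, `rp` reconnects the two components
of `T - pq` would give a lighter spanning tree. Now take the `l`-pie with apex `p` and radius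
`‖q - p‖` whose sector contains the direction of `q - p`; then `p` and `q` lie on its boundary.
Its opening angle is `π/3`, so every point `r` of its interior satisfies
`0 < ‖r - p‖ < ‖q - p‖` and `∠ q p r ≤ π/3`, hence also `‖r - q‖ < ‖q - p‖`: it would lie in
the lune. -/

namespace SimpleGraph

variable {V : Type*} {G T : SimpleGraph V} {p q r : V}

lemma Preconnected.reachable_deleteEdges_or (hG : G.Preconnected) (p q v : V) :
    (G.deleteEdges {s(p, q)}).Reachable v p ∨ (G.deleteEdges {s(p, q)}).Reachable v q := by
  classical
  obtain ⟨w, hw⟩ := hG.exists_isPath v p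
  by_cases hpq : s(p, q) ∈ w.edges
  · -- the path ends at `p`, so its part before `q` avoids `p` and hence the edge `pq`
    have hq := w.snd_mem_support_of_mem_edges hpq
    have hp := Walk.endpoint_notMem_support_takeUntil hw hq (G.ne_of_adj (w.adj_of_mem_edges hpq))
    exact Or.inr ⟨(w.takeUntil q hq).toDeleteEdges {s(p, q)} fun e he he' => hp <| by
      rw [Set.mem_singleton_iff.mp he'] at he
      exact Walk.fst_mem_support_of_mem_edges _ he⟩
  · exact Or.inl (reachable_deleteEdges_iff_exists_walk.mpr ⟨w, hpq⟩)

lemma IsAcyclic.not_reachable_deleteEdges (hT : T.IsAcyclic) (hpq : T.Adj p q)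
    (hr : (T.deleteEdges {s(p, q)}).Reachable r p) : ¬ (T.deleteEdges {s(p, q)}).Reachable r q :=
  fun hrq => isBridge_iff.mp (isAcyclic_iff_forall_adj_isBridge.mp hT hpq) (hr.symm.trans hrq)

lemma IsTree.isTree_deleteEdges_sup_edge (hT : T.IsTree) (hpq : T.Adj p q)
    (hr : (T.deleteEdges {s(p, q)}).Reachable r p) :
    (T.deleteEdges {s(p, q)} ⊔ edge r q).IsTree := by
  set T' := T.deleteEdges {s(p, q)}
  have hnr := hT.isAcyclic.not_reachable_deleteEdges hpq hr
  refine ⟨(connected_iff_exists_forall_reachable _).mpr ⟨q, fun v => Reachable.symm ?_⟩, ?_⟩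
  · have hrq : (T' ⊔ edge r q).Reachable r q :=
      Adj.reachable <| Or.inr <| by
        simpa [edge_adj] using fun h : r = q => hnr (h ▸ Reachable.refl r)
    rcases hT.connected.preconnected.reachable_deleteEdges_or p q v with hv | hv
    · exact ((hv.trans hr.symm).mono le_sup_left).trans hrq
    · exact hv.mono le_sup_left
  · exact (hT.isAcyclic.anti (deleteEdges_le _)).sup_edge_of_not_reachable hnr

end SimpleGraph

open SimpleGraph

section EdgeWeight

variable {P : Finset E} {G : SimpleGraph {x // x ∈ P}} {u v : {x // x ∈ P}}

lemma edgeWeight_deleteEdges_edge (h : G.Adj u v) :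
    edgeWeight P (G.deleteEdges {s(u, v)}) = edgeWeight P G - ‖(u : E) - v‖ := by
  classical
  have hset : (G.deleteEdges {s(u, v)}).edgeSet.toFinite.toFinset =
      G.edgeSet.toFinite.toFinset.erase s(u, v) := by
    ext e
    simp [edgeSet_deleteEdges, and_comm]
  rw [edgeWeight, hset, Finset.sum_erase_eq_sub (by simpa using h)]
  rfl

lemma edgeWeight_sup_edge (h : ¬ G.Adj u v) (hne : u ≠ v) :
    edgeWeight P (G ⊔ edge u v) = edgeWeight P G + ‖(u : E) - v‖ := by
  classical
  have hset : (G ⊔ edge u v).edgeSet.toFinite.toFinset =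
      insert s(u, v) G.edgeSet.toFinite.toFinset := by
    ext e
    simp only [Set.Finite.mem_toFinset, edgeSet_sup, edgeSet_edge, Finset.mem_insert,
      Set.mem_union, Set.mem_sdiff, Set.mem_singleton_iff, Sym2.mem_diagSet, or_comm]
    exact or_congr_left (and_iff_left_of_imp fun he => he ▸ by simpa using hne)
  rw [edgeWeight, hset, Finset.sum_insert (by simpa using h), add_comm]
  rfl

end EdgeWeight

namespace IsEMST

variable {P : Finset E} {T : SimpleGraph {x // x ∈ P}} {p q r : {x // x ∈ P}}

lemma norm_sub_le_of_reachable_deleteEdges (hT : IsEMST P T) (hpq : T.Adj p q)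
    (hr : (T.deleteEdges {s(p, q)}).Reachable r p) : ‖(p : E) - q‖ ≤ ‖(r : E) - q‖ := by
  have hnr := hT.1.isAcyclic.not_reachable_deleteEdges hpq hr
  have hexchange := hT.2 _ (hT.1.isTree_deleteEdges_sup_edge hpq hr)
  rw [edgeWeight_sup_edge (fun h => hnr h.reachable) (fun h => hnr (h ▸ .refl r)),
    edgeWeight_deleteEdges_edge hpq] at hexchange
  linarith

lemma norm_sub_le_max (hT : IsEMST P T) (hpq : T.Adj p q) (r : {x // x ∈ P}) :
    ‖(p : E) - q‖ ≤ max ‖(p : E) - r‖ ‖(q : E) - r‖ := by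
  rcases hT.1.connected.preconnected.reachable_deleteEdges_or p q r with hr | hr
  · exact (hT.norm_sub_le_of_reachable_deleteEdges hpq hr).trans
      (by rw [norm_sub_rev]; exact le_max_right _ _)
  · have h := hT.norm_sub_le_of_reachable_deleteEdges (r := r) hpq.symm (by rwa [Sym2.eq_swap])
    rw [norm_sub_rev, norm_sub_rev (r : E)] at h
    exact h.trans (le_max_left _ _)

end IsEMST

section Geometry

open Filter Topology

lemma mem_frontier_of_forall_add_smul_notMem {F : Type*} [AddCommGroup F] [Module ℝ F]
    [TopologicalSpace F] [ContinuousAdd F] [ContinuousSMul ℝ F] {S : Set F} {x u : F}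
    (hx : x ∈ S) (h : ∀ t : ℝ, 0 < t → x + t • u ∉ S) : x ∈ frontier S := by
  refine ⟨subset_closure hx, fun hint => ?_⟩
  have hray : Tendsto (fun t : ℝ => x + t • u) (𝓝[>] 0) (𝓝 x) := by
    have hcont : Continuous fun t : ℝ => x + t • u := by fun_prop
    simpa using (hcont.tendsto 0).mono_left nhdsWithin_le_nhds
  obtain ⟨t, htS, ht⟩ :=
    ((hray.eventually (mem_interior_iff_mem_nhds.mp hint)).and self_mem_nhdsWithin).exists
  exact h t ht htS

lemma norm_sub_lt_norm_of_norm_mul_norm_le_two_inner {F : Type*} [NormedAddCommGroup F]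
    [InnerProductSpace ℝ F] {u w : F} (h : ‖u‖ * ‖w‖ ≤ 2 * ⟪u, w⟫) (hw : 0 < ‖w‖)
    (hwu : ‖w‖ < ‖u‖) : ‖u - w‖ < ‖u‖ := by
  refine lt_of_pow_lt_pow_left₀ 2 (norm_nonneg u) ?_
  rw [norm_sub_sq_real]
  nlinarith

-- `sector l` is `{x | ‖x‖ ≤ 1 ∧ x ∈ closedWedge l}` by definition.
def closedWedge (l : Fin 6) : Set E :=
  {x | x = 0 ∨ ∃ θ : ℝ, lo l ≤ θ ∧ θ ≤ hi l ∧ x = ‖x‖ • dir θ}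

variable {l : Fin 6} {c x y : E} {lam : ℝ}

lemma norm_dir (θ : ℝ) : ‖dir θ‖ = 1 := by
  simp [dir, pt, EuclideanSpace.norm_eq, Fin.sum_univ_two]

lemma inner_dir_dir (α β : ℝ) : ⟪dir α, dir β⟫ = Real.cos (α - β) := by
  simp only [dir, pt, PiLp.inner_apply, RCLike.inner_apply, conj_trivial, Fin.sum_univ_two]
  simp [Real.cos_sub, mul_comm]

lemma smul_mem_closedWedge {t : ℝ} (ht : 0 ≤ t) (hx : x ∈ closedWedge l) :
    t • x ∈ closedWedge l := by
  rcases hx with rfl | ⟨θ, hθlo, hθhi, hx⟩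
  · exact Or.inl (smul_zero t)
  · refine Or.inr ⟨θ, hθlo, hθhi, ?_⟩
    rw [norm_smul, Real.norm_of_nonneg ht, mul_smul, ← hx]

lemma bvec_mem_closedWedge : bvec l ∈ closedWedge l := by
  have := Real.pi_pos
  exact Or.inr ⟨(l : ℕ) * π / 3, by rw [lo]; linarith, by rw [hi]; linarith,
    by rw [bvec, norm_dir, one_smul]⟩

lemma norm_mul_norm_le_two_inner_of_mem_closedWedge (hx : x ∈ closedWedge l)
    (hy : y ∈ closedWedge l) : ‖x‖ * ‖y‖ ≤ 2 * ⟪x, y⟫ := by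
  rcases hx with rfl | ⟨θ, hθlo, hθhi, hx⟩
  · simp
  rcases hy with rfl | ⟨φ, hφlo, hφhi, hy⟩
  · simp
  have hinner : ⟪x, y⟫ = ‖x‖ * ‖y‖ * Real.cos (θ - φ) := by
    calc ⟪x, y⟫ = ⟪‖x‖ • dir θ, ‖y‖ • dir φ⟫ := by rw [← hx, ← hy]
      _ = ‖x‖ * ‖y‖ * Real.cos (θ - φ) := by
        rw [real_inner_smul_left, real_inner_smul_right, inner_dir_dir, mul_assoc]
  have hcos : 1 / 2 ≤ Real.cos (θ - φ) := by
    have hwidth : hi l - lo l = π / 3 := by rw [hi, lo]; ring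
    have hθφ : |θ - φ| ≤ π / 3 := abs_le.mpr ⟨by linarith, by linarith⟩
    rw [← Real.cos_abs, ← Real.cos_pi_div_three]
    exact Real.cos_le_cos_of_nonneg_of_le_pi (abs_nonneg _) (by linarith [Real.pi_pos]) hθφ
  rw [hinner]
  nlinarith [mul_nonneg (norm_nonneg x) (norm_nonneg y)]

lemma exists_eq_norm_smul_dir (v : E) : ∃ θ ∈ Set.Ioc (-π) π, v = ‖v‖ • dir θ := by
  set z : ℂ := Complex.orthonormalBasisOneI.repr.symm v
  have hz : ‖z‖ = ‖v‖ := LinearIsometryEquiv.norm_map _ v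
  refine ⟨z.arg, ⟨Complex.neg_pi_lt_arg z, Complex.arg_le_pi z⟩, ?_⟩
  ext i
  fin_cases i
  · simp [z, dir, pt, ← hz]
  · simp [z, dir, pt, ← hz]

lemma exists_lo_le_and_le_hi {θ : ℝ} (hlo : -(π / 6) ≤ θ) (hhi : θ < 11 * π / 6) :
    ∃ l : Fin 6, lo l ≤ θ ∧ θ ≤ hi l := by
  have hπ := Real.pi_pos
  have hx : 0 ≤ (θ + π / 6) / (π / 3) := div_nonneg (by linarith) (by positivity)
  set n := ⌊(θ + π / 6) / (π / 3)⌋₊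
  have hn : n < 6 := (Nat.floor_lt hx).mpr <| by
    rw [div_lt_iff₀ (by positivity)]; push_cast; linarith
  have hfloor : (n : ℝ) ≤ (θ + π / 6) / (π / 3) := Nat.floor_le hx
  have hceil : (θ + π / 6) / (π / 3) < n + 1 := Nat.lt_floor_add_one _
  rw [le_div_iff₀ (by positivity)] at hfloor
  rw [div_lt_iff₀ (by positivity)] at hceil
  refine ⟨⟨n, hn⟩, ?_, ?_⟩ <;> simp only [lo, hi] <;> linarith

lemma exists_mem_closedWedge (v : E) : ∃ l : Fin 6, v ∈ closedWedge l := by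
  have hπ := Real.pi_pos
  obtain ⟨θ, ⟨hθ₁, hθ₂⟩, hv⟩ := exists_eq_norm_smul_dir v
  by_cases hθ : -(π / 6) ≤ θ
  · obtain ⟨l, hl⟩ := exists_lo_le_and_le_hi hθ (by linarith)
    exact ⟨l, Or.inr ⟨θ, hl.1, hl.2, hv⟩⟩
  · obtain ⟨l, hl⟩ := exists_lo_le_and_le_hi (θ := θ + 2 * π) (by linarith) (by linarith)
    refine ⟨l, Or.inr ⟨θ + 2 * π, hl.1, hl.2, ?_⟩⟩
    rwa [dir, Real.cos_add_two_pi, Real.sin_add_two_pi]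

lemma mem_lPie_iff (hlam : 0 < lam) :
    x ∈ lPie l c lam ↔ ‖x - c‖ ≤ lam ∧ x - c ∈ closedWedge l := by
  constructor
  · rintro ⟨s, ⟨hs, hsl⟩, rfl⟩
    rw [add_sub_cancel_left, norm_smul, Real.norm_of_nonneg hlam.le]
    exact ⟨mul_le_of_le_one_right hlam.le hs, smul_mem_closedWedge hlam.le hsl⟩
  · rintro ⟨hx, hxl⟩
    refine ⟨lam⁻¹ • (x - c), ⟨?_, smul_mem_closedWedge (inv_nonneg.mpr hlam.le) hxl⟩, ?_⟩
    · rw [norm_smul, Real.norm_of_nonneg (inv_nonneg.mpr hlam.le)]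
      exact inv_mul_le_one_of_le₀ hx hlam.le
    · simp [smul_inv_smul₀ hlam.ne']

lemma apex_mem_frontier_lPie (hlam : 0 < lam) : c ∈ frontier (lPie l c lam) := by
  refine mem_frontier_of_forall_add_smul_notMem (u := -bvec l)
    ((mem_lPie_iff hlam).mpr ⟨by simp [hlam.le], by simp [closedWedge]⟩) fun t ht hmem => ?_
  rw [mem_lPie_iff hlam, add_sub_cancel_left] at hmem
  have hb : ‖bvec l‖ = 1 := norm_dir _
  have := norm_mul_norm_le_two_inner_of_mem_closedWedge hmem.2 (bvec_mem_closedWedge (l := l))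
  rw [smul_neg, norm_neg, inner_neg_left, norm_smul, real_inner_smul_left,
    real_inner_self_eq_norm_sq, hb, Real.norm_of_nonneg ht.le] at this
  linarith

lemma mem_frontier_lPie_of_norm_eq (hlam : 0 < lam) (hx : x - c ∈ closedWedge l)
    (hxc : ‖x - c‖ = lam) : x ∈ frontier (lPie l c lam) := by
  refine mem_frontier_of_forall_add_smul_notMem (u := x - c)
    ((mem_lPie_iff hlam).mpr ⟨hxc.le, hx⟩) fun t ht hmem => ?_
  have hray : x + t • (x - c) - c = (1 + t) • (x - c) := by module
  have := ((mem_lPie_iff hlam).mp hmem).1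
  rw [hray, norm_smul, hxc, Real.norm_of_nonneg (by linarith)] at this
  nlinarith

lemma norm_sub_mem_Ioo_of_mem_interior_lPie (hlam : 0 < lam)
    (hx : x ∈ interior (lPie l c lam)) :
    ‖x - c‖ ∈ Set.Ioo 0 lam ∧ x - c ∈ closedWedge l := by
  have hfr : x ∉ frontier (lPie l c lam) := disjoint_interior_frontier.notMem_of_mem_left hx
  obtain ⟨hxc, hxl⟩ := (mem_lPie_iff hlam).mp (interior_subset hx)
  refine ⟨⟨norm_pos_iff.mpr (sub_ne_zero.mpr fun h => hfr (h ▸ apex_mem_frontier_lPie hlam)),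
    lt_of_le_of_ne hxc fun h => hfr (mem_frontier_lPie_of_norm_eq hlam hxl h)⟩, hxl⟩

end Geometry

theorem emst_edge_mem_pieDelaunayGraph_general (P : Finset E)
    (T : SimpleGraph {x // x ∈ P}) (hT : IsEMST P T)
    (p q : {x // x ∈ P}) (hadj : T.Adj p q) : PDG P (p : E) (q : E) := by
  have hpq : (p : E) ≠ q := fun h => hadj.ne (Subtype.ext h)
  have ha : 0 < ‖(q : E) - p‖ := norm_pos_iff.mpr (sub_ne_zero.mpr hpq.symm)
  obtain ⟨l, hl⟩ := exists_mem_closedWedge ((q : E) - p)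
  refine ⟨l, p.2, q.2, hpq, p, ‖(q : E) - p‖, ha, apex_mem_frontier_lPie ha,
    mem_frontier_lPie_of_norm_eq ha hl rfl, fun r hr hint => ?_⟩
  obtain ⟨⟨hr0, hrp⟩, hrl⟩ := norm_sub_mem_Ioo_of_mem_interior_lPie ha hint
  have hrq : ‖(q : E) - r‖ < ‖(q : E) - p‖ := by
    simpa using norm_sub_lt_norm_of_norm_mul_norm_le_two_inner
      (norm_mul_norm_le_two_inner_of_mem_closedWedge hl hrl) hr0 hrp
  have hmst := hT.norm_sub_le_max hadj ⟨r, hr⟩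
  rw [norm_sub_rev (p : E) q, norm_sub_rev (p : E) r] at hmst
  exact (max_lt hrp hrq).not_ge hmst

/-- every edge of a Euclidean minimum spanning tree of `P` is an edge of
the Pie Delaunay graph `PDG(P)`. -/
theorem emst_edge_mem_pieDelaunayGraph (P : Finset E) (hP : 2 ≤ P.card)
    (T : SimpleGraph {x // x ∈ P}) (hT : IsEMST P T)
    (p q : {x // x ∈ P}) (hadj : T.Adj p q) : PDG P (p : E) (q : E) :=
  emst_edge_mem_pieDelaunayGraph_general P T hT p q hadj
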